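/- Finite-dimensional version of the contour identity: let A, B be n×n complex matrices, V ⊂ ℂ a bounded open set with smooth boundary containing a unique simple zero k♯ of det(A + (ω − k₀)B), with A + (ω − k₀)B invertible on ∂V and k₀ ∈ V. Then k♯ − k₀ = −(1/2πi) tr ∮_{∂V} (A + (ω − k₀)B)^{−1} A dω. -/

import Mathlib

/-! On the contour, `(A + (ω - k₀)B)⁻¹ A = 1 - (ω - k₀)(A + (ω - k₀)B)⁻¹ B`, and by Jacobi's
formula the trace of the last factor is `p'/p` for `p(ω) = det (A + (ω - k₀)B)`. The constant
`n` integrates to zero, and writing `p = (ω - k♯) q` with `q` zero-free on the closed disc,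
`∮ (ω - k₀) p'/p = ∮ (ω - k₀)/(ω - k♯) + ∮ (ω - k₀) q'/q = 2πi (k♯ - k₀)` by Cauchy's integral
formula and Cauchy's theorem. -/

open Metric Matrix Polynomial Complex Set

namespace Matrix

variable {ι : Type*} [Fintype ι] [DecidableEq ι]

section Jacobi

variable {𝕜 : Type*} [NontriviallyNormedField 𝕜]

theorem hasDerivAt_det_one_add_smul (N : Matrix ι ι 𝕜) :
    HasDerivAt (fun t : 𝕜 => det (1 + t • N)) (trace N) 0 := by
  have h := (det (1 + (X : 𝕜[X]) • N.map C)).hasDerivAt 0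
  rw [derivative_det_one_add_X_smul] at h
  convert h using 1
  funext t
  rw [← coe_evalRingHom, RingHom.map_det]
  congr 1
  ext i j
  by_cases hij : i = j <;> simp [hij, mul_comm t]

theorem hasDerivAt_det_add_smul (A B : Matrix ι ι 𝕜) (t : 𝕜)
    (ht : IsUnit (A + t • B).det) :
    HasDerivAt (fun s : 𝕜 => det (A + s • B))
      (det (A + t • B) * trace ((A + t • B)⁻¹ * B)) t := by
  set M := A + t • B
  have hfactor : ∀ s : 𝕜, A + s • B = M * (1 + (s - t) • (M⁻¹ * B)) := fun s => by
    rw [mul_add, mul_one, Matrix.mul_smul, ← Matrix.mul_assoc, mul_nonsing_inv M ht,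
      Matrix.one_mul, sub_smul]
    simp only [M]
    abel
  simp_rw [hfactor, det_mul]
  have h := HasDerivAt.comp_sub_const t t
    (by rw [sub_self]; exact hasDerivAt_det_one_add_smul (M⁻¹ * B))
  exact h.const_mul M.det

end Jacobi

theorem trace_inv_add_smul_mul {K : Type*} [Field K] (A B : Matrix ι ι K) (t : K)
    (ht : IsUnit (A + t • B).det) :
    trace ((A + t • B)⁻¹ * A) = Fintype.card ι - t * trace ((A + t • B)⁻¹ * B) := by
  have h : (A + t • B)⁻¹ * A = 1 - t • ((A + t • B)⁻¹ * B) := by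
    rw [eq_sub_iff_add_eq, ← Matrix.mul_smul, ← Matrix.mul_add, nonsing_inv_mul _ ht]
  rw [h, trace_sub, trace_one, trace_smul, smul_eq_mul]

noncomputable def pencilDet {R : Type*} [CommRing R] (A B : Matrix ι ι R) (k₀ : R) : R[X] :=
  det (A.map C + (X - C k₀) • B.map C)

theorem eval_pencilDet {R : Type*} [CommRing R] (A B : Matrix ι ι R) (k₀ ω : R) :
    (pencilDet A B k₀).eval ω = det (A + (ω - k₀) • B) := by
  rw [pencilDet, ← coe_evalRingHom, RingHom.map_det]
  congr 1
  ext i j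
  simp

theorem eval_derivative_pencilDet {𝕜 : Type*} [NontriviallyNormedField 𝕜]
    (A B : Matrix ι ι 𝕜) (k₀ ω : 𝕜) (hω : IsUnit (A + (ω - k₀) • B).det) :
    (pencilDet A B k₀).derivative.eval ω =
      det (A + (ω - k₀) • B) * trace ((A + (ω - k₀) • B)⁻¹ * B) := by
  have hJacobi := HasDerivAt.comp_sub_const ω k₀ (hasDerivAt_det_add_smul A B (ω - k₀) hω)
  have hP := (pencilDet A B k₀).hasDerivAt ω
  simp only [eval_pencilDet] at hP
  exact hP.unique hJacobi

theorem trace_inv_mul_eq_card_sub_derivative_pencilDet_div {𝕜 : Type*}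
    [NontriviallyNormedField 𝕜] (A B : Matrix ι ι 𝕜) (k₀ ω : 𝕜)
    (hω : (pencilDet A B k₀).eval ω ≠ 0) :
    trace ((A + (ω - k₀) • B)⁻¹ * A) = Fintype.card ι -
      (ω - k₀) * (pencilDet A B k₀).derivative.eval ω / (pencilDet A B k₀).eval ω := by
  rw [eval_pencilDet] at hω
  rw [trace_inv_add_smul_mul A B _ hω.isUnit, eval_derivative_pencilDet A B k₀ ω hω.isUnit,
    eval_pencilDet]
  field_simp

end Matrix

theorem Polynomial.circleIntegral_mul_derivative_div_of_simple_root {P : ℂ[X]} {g : ℂ → ℂ}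
    {c z₀ : ℂ} {R : ℝ} (hg : DiffContOnCl ℂ g (ball c R)) (hz₀ : z₀ ∈ ball c R)
    (hroots : ∀ z ∈ closedBall c R, P.eval z = 0 ↔ z = z₀)
    (hsimple : P.derivative.eval z₀ ≠ 0) :
    (∮ z in C(c, R), g z * P.derivative.eval z / P.eval z) = 2 * Real.pi * I * g z₀ := by
  have hR : 0 < R := pos_of_mem_ball hz₀
  set Q := P /ₘ (X - C z₀)
  have hPQ : (X - C z₀) * Q = P :=
    mul_divByMonic_eq_iff_isRoot.mpr ((hroots z₀ (ball_subset_closedBall hz₀)).mpr rfl)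
  have hP' : Q + (X - C z₀) * derivative Q = derivative P :=
    divByMonic_add_X_sub_C_mul_derivative_divByMonic_eq_derivative P z₀
  have hQ : ∀ z ∈ closedBall c R, Q.eval z ≠ 0 := by
    intro z hz hQz
    rcases eq_or_ne z z₀ with rfl | hne
    · exact hsimple (by simp [← hP', hQz])
    · exact hne ((hroots z hz).mp (by simp [← hPQ, hQz]))
  have hsphere : ∀ z ∈ sphere c R, z - z₀ ≠ 0 := fun z hz h => by
    rw [sub_eq_zero.mp h, mem_sphere] at hz
    exact (mem_ball.mp hz₀).ne hz
  have hsplit : EqOn (fun z => g z * P.derivative.eval z / P.eval z)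
      (fun z => (z - z₀)⁻¹ • g z + g z * Q.derivative.eval z / Q.eval z) (sphere c R) := by
    intro z hz
    have hQz := hQ z (sphere_subset_closedBall hz)
    have := hsphere z hz
    rw [← hP', ← hPQ]
    simp only [eval_add, eval_mul, eval_sub, eval_X, eval_C, smul_eq_mul]
    field_simp
  have hlogQ : DiffContOnCl ℂ (fun z => g z * Q.derivative.eval z / Q.eval z) (ball c R) := by
    have hQ' : ∀ z ∈ closure (ball c R), Q.eval z ≠ 0 := by
      rwa [closure_ball c hR.ne']
    exact ⟨(hg.differentiableOn.mul Q.derivative.differentiableOn).div Q.differentiableOn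
        fun z hz => hQ' z (subset_closure hz),
      (hg.continuousOn.mul Q.derivative.continuousOn).div Q.continuousOn hQ'⟩
  have hpole : CircleIntegrable (fun z => (z - z₀)⁻¹ • g z) c R :=
    (((continuousOn_id.sub continuousOn_const).inv₀ hsphere).smul
      (hg.continuousOn_ball.mono sphere_subset_closedBall)).circleIntegrable hR.le
  rw [circleIntegral.integral_congr hR.le hsplit,
    circleIntegral.integral_add hpole
      ((hlogQ.continuousOn_ball.mono sphere_subset_closedBall).circleIntegrable hR.le),
    hg.circleIntegral_sub_inv_smul hz₀, hlogQ.circleIntegral_eq_zero hR.le, smul_eq_mul, add_zero]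

theorem stmt16_general (n : ℕ) (A B : Matrix (Fin n) (Fin n) ℂ) (k0 ksharp c : ℂ) (R : ℝ)
    (hin : ksharp ∈ ball c R)
    (hzero : ∀ ω ∈ closedBall c R,
      (Matrix.det (A + (ω - k0) • B) = 0 ↔ ω = ksharp))
    (hsimple : deriv (fun ω : ℂ => Matrix.det (A + (ω - k0) • B)) ksharp ≠ 0) :
    ksharp - k0 =
      -(1 / (2 * Real.pi * Complex.I)) *
        (∮ ω in C(c, R), Matrix.trace ((A + (ω - k0) • B)⁻¹ * A)) := by
  set P := pencilDet A B k0
  have hR : 0 ≤ R := (pos_of_mem_ball hin).le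
  simp_rw [← eval_pencilDet A B k0] at hzero hsimple
  rw [Polynomial.deriv] at hsimple
  have hsphere : ∀ ω ∈ sphere c R, P.eval ω ≠ 0 := fun ω hω h => by
    rw [(hzero ω (sphere_subset_closedBall hω)).mp h, mem_sphere] at hω
    exact (mem_ball.mp hin).ne hω
  have hlogP : CircleIntegrable (fun ω => (ω - k0) * P.derivative.eval ω / P.eval ω) c R :=
    (((continuousOn_id.sub continuousOn_const).mul P.derivative.continuousOn).div P.continuousOn
      hsphere).circleIntegrable hR
  rw [circleIntegral.integral_congr hR fun ω hω =>
      trace_inv_mul_eq_card_sub_derivative_pencilDet_div A B k0 ω (hsphere ω hω),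
    circleIntegral.integral_sub (continuousOn_const.circleIntegrable hR) hlogP,
    diffContOnCl_const.circleIntegral_eq_zero hR,
    P.circleIntegral_mul_derivative_div_of_simple_root (g := (· - k0))
      (differentiable_id.sub_const k0).diffContOnCl hin hzero hsimple]
  field_simp
  ring

/-- matrix form of the contour identity of Proposition 2.5: if
det(A + (ω − k₀)B) has a unique, simple zero k♯ inside the contour, the pencil is
invertible on the contour, and k₀ lies inside, then
k♯ − k₀ = −(1/2πi) tr ∮_{∂V} (A + (ω − k₀)B)⁻¹ A dω. -/
theorem stmt16 (n : ℕ) (A B : Matrix (Fin n) (Fin n) ℂ) (k0 ksharp c : ℂ) (R : ℝ)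
    (hR : 0 < R) (hin : ksharp ∈ ball c R) (hk0 : k0 ∈ ball c R)
    (hzero : ∀ ω ∈ closedBall c R,
      (Matrix.det (A + (ω - k0) • B) = 0 ↔ ω = ksharp))
    (hsimple : deriv (fun ω : ℂ => Matrix.det (A + (ω - k0) • B)) ksharp ≠ 0) :
    ksharp - k0 =
      -(1 / (2 * Real.pi * Complex.I)) *
        (∮ ω in C(c, R), Matrix.trace ((A + (ω - k0) • B)⁻¹ * A)) :=
  stmt16_general n A B k0 ksharp c R hin hzero hsimple
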